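/- Let k ≥ 2, let p ∈ ℂ, and let q ∈ ℂ be a primitive k-th root of unity. Then f_k(p,q) = 1 + (−p)^k. -/

import Mathlib

/-!
Deleting the top element of an involution either deletes a fixed point, or deletes a 2-cycle
`{j, top}` together with `j`; the neat pairs of the latter are those of the remaining involution
plus the pairs `{a, top}` with `j < a`. Hence `f` satisfies the Rogers–Szegő recurrence
`f (n + 2) = (1 - p) f (n + 1) + p (1 - q ^ (n + 1)) f n`, so `f n p q = Σ_i [n, i]_q (-p) ^ i`.
If `q` is a primitive `k`-th root of unity, then `[k, i]_q = 0` for `0 < i < k`, by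
`(1 - q ^ (i + 1)) [k, i + 1]_q = (1 - q ^ k) [k - 1, i]_q`.
-/

namespace PaperF

open scoped Classical

/-- The number of fixed points `a(w)` of a permutation of `{1, …, k}`. -/
def fixCount {k : ℕ} (w : Equiv.Perm (Fin k)) : ℕ :=
  (Finset.univ.filter fun i => w i = i).card

/-- The number `c(-w)` of neat pairs of `w`: pairs `{i, j}` of distinct indices with
`w i < j` and `w j < i`. -/
def neatCount {k : ℕ} (w : Equiv.Perm (Fin k)) : ℕ :=
  ((Finset.univ ×ˢ Finset.univ).filter
    fun pr : Fin k × Fin k => pr.1 < pr.2 ∧ w pr.1 < pr.2 ∧ w pr.2 < pr.1).card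

/-- `f_k(p, q) = Σ_{w ∈ S_k, w² = 1} (p(1-q))^{(k - a(w))/2} (1-p)^{a(w)} q^{c(-w)}`,
the sum being over the involutions in the symmetric group on `{1, …, k}`. -/
noncomputable def f (k : ℕ) (p q : ℂ) : ℂ :=
  ∑ w ∈ Finset.univ.filter (fun w : Equiv.Perm (Fin k) => w * w = 1),
    (p * (1 - q)) ^ ((k - fixCount w) / 2) * (1 - p) ^ fixCount w * q ^ neatCount w

section GaussBinom

open Finset

variable {R : Type*} [CommRing R]

def gaussBinom (q : R) : ℕ → ℕ → R
  | _, 0 => 1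
  | 0, _ + 1 => 0
  | n + 1, i + 1 => q ^ (i + 1) * gaussBinom q n (i + 1) + gaussBinom q n i

variable (q : R)

@[simp] lemma gaussBinom_zero_right (n : ℕ) : gaussBinom q n 0 = 1 := by cases n <;> rfl

@[simp] lemma gaussBinom_zero_succ (i : ℕ) : gaussBinom q 0 (i + 1) = 0 := rfl

lemma gaussBinom_succ_succ (n i : ℕ) :
    gaussBinom q (n + 1) (i + 1) = q ^ (i + 1) * gaussBinom q n (i + 1) + gaussBinom q n i :=
  rfl

lemma gaussBinom_eq_zero_of_lt {n i : ℕ} (h : n < i) : gaussBinom q n i = 0 := by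
  induction n generalizing i with
  | zero => obtain ⟨i, rfl⟩ := Nat.exists_eq_succ_of_ne_zero (by omega : i ≠ 0); rfl
  | succ n ih =>
    obtain ⟨i, rfl⟩ := Nat.exists_eq_succ_of_ne_zero (by omega : i ≠ 0)
    rw [gaussBinom_succ_succ, ih (by omega), ih (by omega), mul_zero, add_zero]

@[simp] lemma gaussBinom_self (n : ℕ) : gaussBinom q n n = 1 := by
  induction n with
  | zero => rfl
  | succ n ih => rw [gaussBinom_succ_succ, gaussBinom_eq_zero_of_lt q n.lt_succ_self, ih]; ring

lemma one_sub_pow_mul_gaussBinom_succ_succ (m i : ℕ) :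
    (1 - q ^ (i + 1)) * gaussBinom q (m + 1) (i + 1) = (1 - q ^ (m + 1)) * gaussBinom q m i := by
  induction m generalizing i with
  | zero => cases i <;> simp [gaussBinom_succ_succ]
  | succ m ih =>
    cases i with
    | zero =>
      rw [gaussBinom_succ_succ, gaussBinom_zero_right]
      linear_combination q * ih 0 + q * (1 - q ^ (m + 1)) * gaussBinom_zero_right q m
    | succ j =>
      rw [gaussBinom_succ_succ q (m + 1) (j + 1)]
      linear_combination q ^ (j + 2) * ih (j + 1) + q * ih j
        - q * (1 - q ^ (m + 1)) * gaussBinom_succ_succ q m j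

lemma gaussBinom_add_two_succ (m i : ℕ) :
    gaussBinom q (m + 2) (i + 1) = gaussBinom q (m + 1) (i + 1) + gaussBinom q (m + 1) i
      - (1 - q ^ (m + 1)) * gaussBinom q m i := by
  linear_combination gaussBinom_succ_succ q (m + 1) i - one_sub_pow_mul_gaussBinom_succ_succ q m i

lemma gaussBinom_eq_zero_of_isPrimitiveRoot [IsDomain R] {q : R} {k i : ℕ}
    (hq : IsPrimitiveRoot q k) (hi : 0 < i) (hik : i < k) : gaussBinom q k i = 0 := by
  obtain ⟨j, rfl⟩ : ∃ j, i = j + 1 := ⟨i - 1, by omega⟩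
  obtain ⟨m, rfl⟩ : ∃ m, k = m + 1 := ⟨k - 1, by omega⟩
  have hq1 : 1 - q ^ (j + 1) ≠ 0 :=
    sub_ne_zero.mpr (hq.pow_ne_one_of_pos_of_lt (by omega) hik).symm
  have := one_sub_pow_mul_gaussBinom_succ_succ q m j
  rw [hq.pow_eq_one, sub_self, zero_mul] at this
  exact (mul_eq_zero.mp this).resolve_left hq1

def rogersSzego (q x : R) (n : ℕ) : R := ∑ i ∈ range (n + 1), gaussBinom q n i * x ^ i

variable {q}

lemma rogersSzego_eq_sum_range (x : R) {n N : ℕ} (h : n < N) :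
    rogersSzego q x n = ∑ i ∈ range N, gaussBinom q n i * x ^ i := by
  refine sum_subset (range_subset_range.mpr h) fun i _ hi => ?_
  rw [gaussBinom_eq_zero_of_lt q (by simpa using hi), zero_mul]

@[simp] lemma rogersSzego_zero (x : R) : rogersSzego q x 0 = 1 := by simp [rogersSzego]

@[simp] lemma rogersSzego_one (x : R) : rogersSzego q x 1 = 1 + x := by
  simp [rogersSzego, sum_range_succ]

lemma rogersSzego_add_two (x : R) (n : ℕ) :
    rogersSzego q x (n + 2) =
      (1 + x) * rogersSzego q x (n + 1) - x * (1 - q ^ (n + 1)) * rogersSzego q x n := by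
  have hA : ∑ i ∈ range (n + 2), gaussBinom q (n + 1) (i + 1) * x ^ (i + 1) =
      rogersSzego q x (n + 1) - 1 := by
    rw [rogersSzego_eq_sum_range x (by omega : n + 1 < n + 3), sum_range_succ' _ (n + 2)]
    simp
  have hB : ∑ i ∈ range (n + 2), gaussBinom q (n + 1) i * x ^ (i + 1) =
      x * rogersSzego q x (n + 1) := by
    rw [rogersSzego, mul_sum]
    exact sum_congr rfl fun i _ => by ring
  have hC : ∑ i ∈ range (n + 2), (1 - q ^ (n + 1)) * gaussBinom q n i * x ^ (i + 1) =
      x * (1 - q ^ (n + 1)) * rogersSzego q x n := by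
    rw [rogersSzego_eq_sum_range x (by omega : n < n + 2), mul_sum]
    exact sum_congr rfl fun i _ => by ring
  rw [rogersSzego, sum_range_succ']
  have hterm : ∀ i, gaussBinom q (n + 2) (i + 1) * x ^ (i + 1) =
      gaussBinom q (n + 1) (i + 1) * x ^ (i + 1) + gaussBinom q (n + 1) i * x ^ (i + 1)
        - (1 - q ^ (n + 1)) * gaussBinom q n i * x ^ (i + 1) := fun i => by
    rw [gaussBinom_add_two_succ]; ring
  rw [sum_congr rfl fun i _ => hterm i, sum_sub_distrib, sum_add_distrib, hA, hB, hC,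
    gaussBinom_zero_right, pow_zero]
  ring

lemma rogersSzego_of_isPrimitiveRoot [IsDomain R] {k : ℕ} (hq : IsPrimitiveRoot q k)
    (hk : 0 < k) (x : R) : rogersSzego q x k = 1 + x ^ k := by
  obtain ⟨m, rfl⟩ := Nat.exists_eq_add_of_lt hk
  rw [rogersSzego, sum_range_succ', sum_range_succ, sum_eq_zero fun i hi =>
    by rw [gaussBinom_eq_zero_of_isPrimitiveRoot hq i.succ_pos (by simp at hi; omega), zero_mul]]
  simp [add_comm]

end GaussBinom

section Involutions

open Finset Equiv

@[simp] lemma _root_.Fin.not_last_lt {m : ℕ} (x : Fin (m + 1)) : ¬Fin.last m < x :=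
  not_lt_of_ge (Fin.le_last x)

lemma _root_.Equiv.Perm.exists_restrict {α β : Type*} [Finite α] (e : α ↪ β) (w : Perm β)
    (h : ∀ a, w (e a) ∈ Set.range e) : ∃ u : Perm α, ∀ a, e (u a) = w (e a) := by
  choose g hg using h
  have hg_inj : Function.Injective g := fun a b hab =>
    e.injective (w.injective (by rw [← hg, ← hg, hab]))
  exact ⟨Equiv.ofBijective g (Finite.injective_iff_bijective.mp hg_inj), hg⟩

lemma _root_.Equiv.Perm.apply_apply_of_mul_self {α : Type*} {w : Perm α} (hw : w * w = 1)
    (a : α) : w (w a) = a := by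
  rw [← Perm.mul_apply, hw, Perm.one_apply]

lemma _root_.Equiv.Perm.mul_self_eq_one_of_embedding {α β : Type*} {e : α ↪ β} {u : Perm α}
    {w : Perm β} (hu : ∀ a, e (u a) = w (e a)) (hw : w * w = 1) : u * u = 1 := by
  ext a
  apply e.injective
  rw [Perm.mul_apply, Perm.one_apply, hu, hu, Perm.apply_apply_of_mul_self hw]

variable {n : ℕ}

def involutions (n : ℕ) : Finset (Perm (Fin n)) := univ.filter fun w => w * w = 1

@[simp] lemma mem_involutions {w : Perm (Fin n)} : w ∈ involutions n ↔ w * w = 1 := by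
  simp [involutions]

noncomputable def weight (p q : ℂ) {k : ℕ} (w : Perm (Fin k)) : ℂ :=
  (p * (1 - q)) ^ ((k - fixCount w) / 2) * (1 - p) ^ fixCount w * q ^ neatCount w

lemma f_eq_sum_weight (k : ℕ) (p q : ℂ) : f k p q = ∑ w ∈ involutions k, weight p q w := rfl

lemma fixCount_eq_sum {k : ℕ} (w : Perm (Fin k)) :
    fixCount w = ∑ x, if w x = x then 1 else 0 :=
  card_filter _ _

lemma neatCount_eq_sum {k : ℕ} (w : Perm (Fin k)) :
    neatCount w = ∑ a, ∑ b, if a < b ∧ w a < b ∧ w b < a then 1 else 0 := by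
  rw [neatCount, card_filter, sum_product]

lemma fixCount_le {k : ℕ} (w : Perm (Fin k)) : fixCount w ≤ k :=
  (card_filter_le _ _).trans_eq (card_fin k)

def extendLast (u : Perm (Fin n)) : Perm (Fin (n + 1)) := u.viaFintypeEmbedding Fin.castSuccEmb

@[simp] lemma extendLast_castSucc (u : Perm (Fin n)) (i : Fin n) :
    extendLast u i.castSucc = (u i).castSucc :=
  Perm.viaFintypeEmbedding_apply_image u Fin.castSuccEmb i

@[simp] lemma extendLast_last (u : Perm (Fin n)) : extendLast u (Fin.last n) = Fin.last n :=
  Perm.viaFintypeEmbedding_apply_notMem_range u Fin.castSuccEmb (by simp [Fin.range_castSucc])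

def skipEmb (j : Fin (n + 1)) : Fin n ↪ Fin (n + 2) := j.succAboveEmb.trans Fin.castSuccEmb

lemma skipEmb_apply (j : Fin (n + 1)) (z : Fin n) : skipEmb j z = (j.succAbove z).castSucc := rfl

@[simp] lemma skipEmb_ne_last (j : Fin (n + 1)) (z : Fin n) : skipEmb j z ≠ Fin.last _ :=
  Fin.castSucc_ne_last _

@[simp] lemma skipEmb_ne_castSucc (j : Fin (n + 1)) (z : Fin n) : skipEmb j z ≠ j.castSucc :=
  fun h => j.succAbove_ne z (Fin.castSucc_injective _ h)

@[simp] lemma skipEmb_lt_last (j : Fin (n + 1)) (z : Fin n) : skipEmb j z < Fin.last _ :=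
  Fin.castSucc_lt_last _

lemma skipEmb_lt_skipEmb (j : Fin (n + 1)) {y z : Fin n} : skipEmb j y < skipEmb j z ↔ y < z := by
  simp [skipEmb_apply, Fin.succAbove_lt_succAbove_iff]

lemma eq_last_or_castSucc_or_skipEmb (j : Fin (n + 1)) (x : Fin (n + 2)) :
    x = Fin.last _ ∨ x = j.castSucc ∨ ∃ z, skipEmb j z = x := by
  induction x using Fin.lastCases with
  | last => exact Or.inl rfl
  | cast y =>
    obtain rfl | hy := eq_or_ne y j
    · exact Or.inr (Or.inl rfl)
    · obtain ⟨z, rfl⟩ := Fin.exists_succAbove_eq hy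
      exact Or.inr (Or.inr ⟨z, rfl⟩)

lemma sum_univ_skipEmb {M : Type*} [AddCommMonoid M] (j : Fin (n + 1)) (g : Fin (n + 2) → M) :
    ∑ x, g x = g (Fin.last _) + g j.castSucc + ∑ z, g (skipEmb j z) := by
  rw [Fin.sum_univ_castSucc, Fin.sum_univ_succAbove _ j, add_comm, add_assoc]
  rfl

def pairLast (j : Fin (n + 1)) (u : Perm (Fin n)) : Perm (Fin (n + 2)) :=
  swap j.castSucc (Fin.last _) * u.viaFintypeEmbedding (skipEmb j)

@[simp] lemma pairLast_skipEmb (j : Fin (n + 1)) (u : Perm (Fin n)) (z : Fin n) :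
    pairLast j u (skipEmb j z) = skipEmb j (u z) := by
  rw [pairLast, Perm.mul_apply, Perm.viaFintypeEmbedding_apply_image,
    swap_apply_of_ne_of_ne (skipEmb_ne_castSucc _ _) (skipEmb_ne_last _ _)]

@[simp] lemma pairLast_last (j : Fin (n + 1)) (u : Perm (Fin n)) :
    pairLast j u (Fin.last _) = j.castSucc := by
  rw [pairLast, Perm.mul_apply, Perm.viaFintypeEmbedding_apply_notMem_range _ _
    (by rintro ⟨z, hz⟩; exact skipEmb_ne_last j z hz), swap_apply_right]

@[simp] lemma pairLast_castSucc (j : Fin (n + 1)) (u : Perm (Fin n)) :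
    pairLast j u j.castSucc = Fin.last _ := by
  rw [pairLast, Perm.mul_apply, Perm.viaFintypeEmbedding_apply_notMem_range _ _
    (by rintro ⟨z, hz⟩; exact skipEmb_ne_castSucc j z hz), swap_apply_left]

lemma extendLast_injective : Function.Injective (extendLast (n := n)) := fun u u' h =>
  Equiv.ext fun i => Fin.castSucc_injective _ <| by
    rw [← extendLast_castSucc, ← extendLast_castSucc, h]

lemma extendLast_mul_self {u : Perm (Fin n)} (hu : u * u = 1) :
    extendLast u * extendLast u = 1 := by
  ext x
  induction x using Fin.lastCases <;> simp [Perm.apply_apply_of_mul_self hu]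

lemma exists_extendLast_eq {w : Perm (Fin (n + 1))} (hw : w * w = 1)
    (hlast : w (Fin.last n) = Fin.last n) :
    ∃ u : Perm (Fin n), u * u = 1 ∧ extendLast u = w := by
  have hrange : ∀ i, w (Fin.castSuccEmb i) ∈ Set.range Fin.castSuccEmb := fun i =>
    ⟨_, Fin.castSucc_castPred _ fun h => Fin.castSucc_ne_last i <| by
      rwa [← hlast, w.injective.eq_iff] at h⟩
  obtain ⟨u, hu⟩ := Perm.exists_restrict _ w hrange
  refine ⟨u, Perm.mul_self_eq_one_of_embedding hu hw, Equiv.ext fun x => ?_⟩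
  induction x using Fin.lastCases with
  | last => rw [extendLast_last, hlast]
  | cast i => exact (extendLast_castSucc u i).trans (hu i)

lemma pairLast_injective :
    Function.Injective fun ju : Fin (n + 1) × Perm (Fin n) => pairLast ju.1 ju.2 := by
  rintro ⟨j, u⟩ ⟨j', u'⟩ h
  have hj : j = j' := Fin.castSucc_injective _ <| by
    simpa using congr($h (Fin.last _))
  subst hj
  refine Prod.ext rfl (Equiv.ext fun z => (skipEmb j).injective ?_)
  simpa using congr($h (skipEmb j z))

lemma pairLast_mul_self (j : Fin (n + 1)) {u : Perm (Fin n)} (hu : u * u = 1) :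
    pairLast j u * pairLast j u = 1 := by
  ext x
  rcases eq_last_or_castSucc_or_skipEmb j x with rfl | rfl | ⟨z, rfl⟩ <;>
    simp [Perm.apply_apply_of_mul_self hu]

lemma exists_pairLast_eq {w : Perm (Fin (n + 2))} (hw : w * w = 1)
    (hlast : w (Fin.last _) ≠ Fin.last _) :
    ∃ j u, u * u = 1 ∧ pairLast j u = w := by
  set j := (w (Fin.last _)).castPred hlast
  have hwj : w j.castSucc = Fin.last _ := by
    rw [Fin.castSucc_castPred, Perm.apply_apply_of_mul_self hw]
  have hrange : ∀ z, w (skipEmb j z) ∈ Set.range (skipEmb j) := fun z => by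
    rcases eq_last_or_castSucc_or_skipEmb j (w (skipEmb j z)) with h | h | h
    · rw [← hwj, w.injective.eq_iff] at h
      exact absurd h (skipEmb_ne_castSucc j z)
    · rw [Fin.castSucc_castPred, w.injective.eq_iff] at h
      exact absurd h (skipEmb_ne_last j z)
    · exact h
  obtain ⟨u, hu⟩ := Perm.exists_restrict _ w hrange
  refine ⟨j, u, Perm.mul_self_eq_one_of_embedding hu hw, Equiv.ext fun x => ?_⟩
  rcases eq_last_or_castSucc_or_skipEmb j x with rfl | rfl | ⟨z, rfl⟩
  · simp [j]
  · rw [pairLast_castSucc, hwj]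
  · rw [pairLast_skipEmb, hu]

lemma sum_involutions_fix_last {M : Type*} [AddCommMonoid M] (F : Perm (Fin (n + 1)) → M) :
    ∑ w ∈ (involutions (n + 1)).filter (fun w => w (Fin.last n) = Fin.last n), F w =
      ∑ u ∈ involutions n, F (extendLast u) := by
  symm
  refine sum_nbij extendLast (fun u hu => ?_) extendLast_injective.injOn (fun w hw => ?_)
    fun _ _ => rfl
  · simp only [mem_involutions] at hu
    simp [extendLast_mul_self hu]
  · simp only [coe_filter, mem_involutions, Set.mem_ofPred_eq] at hw
    obtain ⟨u, hu, rfl⟩ := exists_extendLast_eq hw.1 hw.2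
    exact ⟨u, by simpa using hu, rfl⟩

lemma sum_involutions_move_last {M : Type*} [AddCommMonoid M] (F : Perm (Fin (n + 2)) → M) :
    ∑ w ∈ (involutions (n + 2)).filter (fun w => w (Fin.last _) ≠ Fin.last _), F w =
      ∑ j, ∑ u ∈ involutions n, F (pairLast j u) := by
  rw [← sum_product']
  symm
  refine sum_nbij (fun ju => pairLast ju.1 ju.2) (fun ju hju => ?_) pairLast_injective.injOn
    (fun w hw => ?_) fun _ _ => rfl
  · simp only [mem_product, mem_involutions] at hju
    simp [pairLast_mul_self _ hju.2]
  · simp only [coe_filter, mem_involutions, Set.mem_ofPred_eq] at hw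
    obtain ⟨j, u, hu, rfl⟩ := exists_pairLast_eq hw.1 hw.2
    exact ⟨(j, u), by simpa using hu, rfl⟩

lemma fixCount_extendLast (u : Perm (Fin n)) : fixCount (extendLast u) = fixCount u + 1 := by
  rw [fixCount_eq_sum, fixCount_eq_sum, Fin.sum_univ_castSucc]
  simp only [extendLast_castSucc, extendLast_last, Fin.castSucc_inj, if_true]

lemma neatCount_extendLast (u : Perm (Fin n)) : neatCount (extendLast u) = neatCount u := by
  rw [neatCount_eq_sum, neatCount_eq_sum]
  simp only [Fin.sum_univ_castSucc, extendLast_castSucc, extendLast_last,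
    Fin.castSucc_lt_castSucc_iff, Fin.not_last_lt, and_false, false_and, if_false, sum_const_zero,
    add_zero]

lemma fixCount_pairLast (j : Fin (n + 1)) (u : Perm (Fin n)) :
    fixCount (pairLast j u) = fixCount u := by
  rw [fixCount_eq_sum, fixCount_eq_sum, sum_univ_skipEmb j]
  simp [(Fin.castSucc_ne_last j).symm, (skipEmb j).injective.eq_iff]

lemma sum_castSucc_lt_skipEmb (j : Fin (n + 1)) :
    ∑ z, (if j.castSucc < skipEmb j z then 1 else 0) = n - j := by
  have h := Fin.sum_univ_succAbove (fun y => if j < y then 1 else 0) j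
  simp only [lt_self_iff_false, if_false, zero_add] at h
  simp only [skipEmb_apply, Fin.castSucc_lt_castSucc_iff, ← h, ← card_filter, filter_lt_eq_Ioi,
    Fin.card_Ioi]
  omega

lemma neatCount_pairLast (j : Fin (n + 1)) (u : Perm (Fin n)) :
    neatCount (pairLast j u) = neatCount u + (n - j) := by
  rw [neatCount_eq_sum, neatCount_eq_sum, sum_univ_skipEmb j, ← sum_castSucc_lt_skipEmb j]
  simp only [sum_univ_skipEmb j, pairLast_last, pairLast_castSucc, pairLast_skipEmb,
    skipEmb_lt_skipEmb, skipEmb_lt_last, Fin.not_last_lt, true_and, and_false,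
    false_and, if_false, sum_const_zero, add_zero, zero_add, sum_add_distrib]
  ring

lemma weight_extendLast (p q : ℂ) (u : Perm (Fin n)) :
    weight p q (extendLast u) = (1 - p) * weight p q u := by
  rw [weight, weight, fixCount_extendLast, neatCount_extendLast, Nat.add_sub_add_right, pow_succ]
  ring

lemma weight_pairLast (p q : ℂ) (j : Fin (n + 1)) (u : Perm (Fin n)) :
    weight p q (pairLast j u) = p * (1 - q) * q ^ (n - j) * weight p q u := by
  have h : (n + 2 - fixCount u) / 2 = (n - fixCount u) / 2 + 1 := by
    have := fixCount_le u
    omega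
  rw [weight, weight, fixCount_pairLast, neatCount_pairLast, h, pow_succ, pow_add]
  ring

lemma one_sub_mul_sum_fin_pow_sub {R : Type*} [CommRing R] (q : R) (n : ℕ) :
    (1 - q) * ∑ j : Fin (n + 1), q ^ (n - j) = 1 - q ^ (n + 1) := by
  have h := sum_range_reflect (fun j => q ^ j) (n + 1)
  simp only [Nat.add_sub_cancel] at h
  rw [Fin.sum_univ_eq_sum_range (fun j => q ^ (n - j)), h, mul_neg_geom_sum]

lemma f_add_two (n : ℕ) (p q : ℂ) :
    f (n + 2) p q = (1 - p) * f (n + 1) p q + p * (1 - q ^ (n + 1)) * f n p q := by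
  rw [f_eq_sum_weight, ← sum_filter_add_sum_filter_not _ fun w => w (Fin.last _) = Fin.last _,
    sum_involutions_fix_last, sum_involutions_move_last]
  simp only [weight_extendLast, weight_pairLast, ← mul_sum, ← sum_mul, ← f_eq_sum_weight]
  rw [← one_sub_mul_sum_fin_pow_sub]
  ring

lemma f_zero (p q : ℂ) : f 0 p q = 1 := by
  simp [f_eq_sum_weight, involutions, weight, fixCount, neatCount, filter_singleton]

lemma f_one (p q : ℂ) : f 1 p q = 1 - p := by
  simp [f_eq_sum_weight, involutions, weight, fixCount, neatCount, filter_singleton]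

end Involutions

lemma f_eq_rogersSzego (n : ℕ) (p q : ℂ) : f n p q = rogersSzego q (-p) n := by
  induction n using Nat.twoStepInduction with
  | zero => rw [f_zero, rogersSzego_zero]
  | one => rw [f_one, rogersSzego_one, sub_eq_add_neg]
  | more n ih₀ ih₁ => rw [f_add_two, rogersSzego_add_two, ih₀, ih₁]; ring

/-- `f_k(p, q) = 1 + (-p)^k` when `q` is a primitive `k`-th root of unity. -/
theorem f_eq_one_add_neg_p_pow (k : ℕ) (hk : 2 ≤ k) (p q : ℂ) (hq : IsPrimitiveRoot q k) :
    f k p q = 1 + (-p) ^ k := by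
  rw [f_eq_rogersSzego, rogersSzego_of_isPrimitiveRoot hq (by omega)]

end PaperF
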